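/- arXiv:2110.12176 — 2 statements merged into one kernel-verified Lean document; each statement's English description precedes it below -/
import Mathlib

section
/- Let y_1,…,y_n ∈ ℂ^m and let C be a closed cone of Hermitian matrices (closed under multiplication by positive scalars). Suppose X* minimizes log det X over positive definite X ∈ C subject to (1/n)·Σ_{i=1}^n y_i^H X^{-1} y_i ≤ 1. Then R* = X*/m minimizes f(R) = (1/n)·Σ_{i=1}^n y_i^H R^{-1} y_i + log det R over positive definite R ∈ C. -/
/-!
Scaling `X ↦ t • X` divides the constraint value `(1/n) Σ yᵢᴴ X⁻¹ yᵢ` by `t` and adds `m log t`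
to `log det X`. Hence the constraint is active at `X*` (otherwise shrinking `X*` would lower
`log det`), and for any positive definite `R ∈ C` the rescaled matrix `b • R`, with `b` the
constraint value at `R`, is feasible (`C` is a cone), so `log det X* ≤ m log b + log det R`.
Since `f (X*/m) = m - m log m + log det X*`, the inequality `m log (b/m) ≤ b - m` (that is,
`log x ≤ x - 1`) yields `f (X*/m) ≤ b + log det R = f R`.
-/

open Matrix ComplexOrder

lemma Real.mul_log_div_le_sub {a b : ℝ} (ha : 0 < a) (hb : 0 < b) : a * Real.log (b / a) ≤ b - a :=
  calc a * Real.log (b / a) ≤ a * (b / a - 1) :=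
        mul_le_mul_of_nonneg_left (Real.log_le_sub_one_of_pos (by positivity)) ha.le
    _ = b - a := by field_simp

namespace Matrix

variable {𝕜 ι : Type*} [RCLike 𝕜] [Fintype ι] [DecidableEq ι]

lemma PosDef.re_det_pos {A : Matrix ι ι 𝕜} (hA : A.PosDef) : 0 < RCLike.re A.det :=
  (RCLike.pos_iff.mp hA.det_pos).1

lemma inv_real_smul {t : ℝ} (ht : t ≠ 0) {A : Matrix ι ι 𝕜} (hA : IsUnit A) :
    (t • A)⁻¹ = t⁻¹ • A⁻¹ :=
  inv_eq_left_inv (by simp [smul_smul, ht, nonsing_inv_mul _ ((isUnit_iff_isUnit_det A).mp hA)])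

lemma log_re_det_real_smul {t : ℝ} (ht : 0 < t) {A : Matrix ι ι 𝕜} (hA : A.PosDef) :
    Real.log (RCLike.re (t • A).det) =
      Fintype.card ι * Real.log t + Real.log (RCLike.re A.det) := by
  have hdet : (t • A).det = ((t ^ Fintype.card ι : ℝ) : 𝕜) * A.det := by
    rw [← algebraMap_smul 𝕜, det_smul]
    simp
  rw [hdet, RCLike.re_ofReal_mul, Real.log_mul (by positivity) hA.re_det_pos.ne', Real.log_pow]

end Matrix

section MeanQuadForm

variable {𝕜 ι : Type*} [RCLike 𝕜] [Fintype ι] {n : ℕ}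

noncomputable def meanQuadForm (y : Fin n → ι → 𝕜) (A : Matrix ι ι 𝕜) : ℝ :=
  (1 / n : ℝ) * ∑ i, RCLike.re (star (y i) ⬝ᵥ A *ᵥ y i)

variable (y : Fin n → ι → 𝕜)

lemma meanQuadForm_real_smul (t : ℝ) (A : Matrix ι ι 𝕜) :
    meanQuadForm y (t • A) = t * meanQuadForm y A := by
  simp only [meanQuadForm, smul_mulVec, dotProduct_smul, RCLike.smul_re, ← Finset.mul_sum]
  ring

lemma meanQuadForm_inv_real_smul [DecidableEq ι] {t : ℝ} (ht : t ≠ 0) {A : Matrix ι ι 𝕜}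
    (hA : IsUnit A) : meanQuadForm y (t • A)⁻¹ = t⁻¹ * meanQuadForm y A⁻¹ := by
  rw [inv_real_smul ht hA, meanQuadForm_real_smul]

lemma meanQuadForm_nonneg {A : Matrix ι ι 𝕜} (hA : A.PosSemidef) : 0 ≤ meanQuadForm y A :=
  mul_nonneg (by positivity) (Finset.sum_nonneg fun i _ => hA.re_dotProduct_nonneg (y i))

lemma meanQuadForm_eq_zero_of_posDef {A : Matrix ι ι 𝕜} (hA : A.PosDef)
    (h : meanQuadForm y A = 0) (B : Matrix ι ι 𝕜) : meanQuadForm y B = 0 := by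
  rcases mul_eq_zero.mp h with hn | hsum
  · simp [meanQuadForm, hn]
  · have hy : ∀ i, y i = 0 := fun i => by
      by_contra hyi
      refine (hA.re_dotProduct_pos hyi).ne' ?_
      exact (Finset.sum_eq_zero_iff_of_nonneg fun j _ =>
        hA.posSemidef.re_dotProduct_nonneg (y j)).mp hsum i (Finset.mem_univ i)
    simp [meanQuadForm, hy]

end MeanQuadForm

section LogDetMin

variable {𝕜 ι : Type*} [RCLike 𝕜] [Fintype ι] [DecidableEq ι] {n : ℕ} {y : Fin n → ι → 𝕜}
  {C : Set (Matrix ι ι 𝕜)} {Xstar : Matrix ι ι 𝕜}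

def IsLogDetMinOn (y : Fin n → ι → 𝕜) (C : Set (Matrix ι ι 𝕜)) (Xstar : Matrix ι ι 𝕜) : Prop :=
  ∀ X ∈ C, X.PosDef → meanQuadForm y X⁻¹ ≤ 1 →
    Real.log (RCLike.re Xstar.det) ≤ Real.log (RCLike.re X.det)

lemma IsLogDetMinOn.log_det_le_real_smul (hXopt : IsLogDetMinOn y C Xstar)
    (hcone : ∀ X ∈ C, ∀ t : ℝ, 0 < t → t • X ∈ C) {R : Matrix ι ι 𝕜} (hRC : R ∈ C)
    (hR : R.PosDef) {t : ℝ} (ht : 0 < t) (hRt : meanQuadForm y R⁻¹ ≤ t) :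
    Real.log (RCLike.re Xstar.det) ≤ Fintype.card ι * Real.log t + Real.log (RCLike.re R.det) := by
  have hfeas : meanQuadForm y (t • R)⁻¹ ≤ 1 := by
    rw [meanQuadForm_inv_real_smul y ht.ne' hR.isUnit, inv_mul_le_iff₀ ht, mul_one]
    exact hRt
  rw [← log_re_det_real_smul ht hR]
  exact hXopt _ (hcone R hRC t ht) (hR.smul ht) hfeas

lemma IsLogDetMinOn.meanQuadForm_inv_eq_one [Nonempty ι] (hXopt : IsLogDetMinOn y C Xstar)
    (hcone : ∀ X ∈ C, ∀ t : ℝ, 0 < t → t • X ∈ C) (hXC : Xstar ∈ C) (hXpd : Xstar.PosDef)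
    (hXfeas : meanQuadForm y Xstar⁻¹ ≤ 1) : meanQuadForm y Xstar⁻¹ = 1 := by
  by_contra hne
  set a := meanQuadForm y Xstar⁻¹
  have ha : 0 ≤ a := meanQuadForm_nonneg y hXpd.inv.posSemidef
  have ha1 : a < 1 := lt_of_le_of_ne hXfeas hne
  -- shrink `Xstar` by a factor `t ∈ (a, 1)`
  have hlog := hXopt.log_det_le_real_smul hcone hXC hXpd (t := (a + 1) / 2) (by positivity)
    (by linarith)
  have hlog_neg : Real.log ((a + 1) / 2) < 0 := Real.log_neg (by positivity) (by linarith)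
  have hcard : (0 : ℝ) < Fintype.card ι := by exact_mod_cast Fintype.card_pos
  linarith [mul_neg_of_pos_of_neg hcard hlog_neg]

lemma IsLogDetMinOn.objective_le [Nonempty ι] (hXopt : IsLogDetMinOn y C Xstar)
    (hcone : ∀ X ∈ C, ∀ t : ℝ, 0 < t → t • X ∈ C) (hXC : Xstar ∈ C) (hXpd : Xstar.PosDef)
    (hXfeas : meanQuadForm y Xstar⁻¹ ≤ 1) {R : Matrix ι ι 𝕜} (hRC : R ∈ C) (hR : R.PosDef) :
    meanQuadForm y ((1 / Fintype.card ι : ℝ) • Xstar)⁻¹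
        + Real.log (RCLike.re ((1 / Fintype.card ι : ℝ) • Xstar).det)
      ≤ meanQuadForm y R⁻¹ + Real.log (RCLike.re R.det) := by
  have hd : (0 : ℝ) < Fintype.card ι := by exact_mod_cast Fintype.card_pos
  have hX1 := hXopt.meanQuadForm_inv_eq_one hcone hXC hXpd hXfeas
  set b := meanQuadForm y R⁻¹
  have hb : 0 < b := by
    refine (meanQuadForm_nonneg y hR.inv.posSemidef).lt_of_ne fun hb0 => ?_
    simpa [hX1] using meanQuadForm_eq_zero_of_posDef y hR.inv hb0.symm Xstar⁻¹
  have hlog := hXopt.log_det_le_real_smul hcone hRC hR hb le_rfl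
  have hscalar := Real.mul_log_div_le_sub hd hb
  rw [meanQuadForm_inv_real_smul y (by positivity) hXpd.isUnit, hX1,
    log_re_det_real_smul (by positivity) hXpd]
  rw [Real.log_div hb.ne' hd.ne'] at hscalar
  rw [one_div, Real.log_inv, inv_inv]
  linarith

end LogDetMin

theorem stmt4_general {m n : ℕ} (hm : 0 < m)
    (y : Fin n → Fin m → ℂ) (C : Set (Matrix (Fin m) (Fin m) ℂ))
    (hcone : ∀ X ∈ C, ∀ t : ℝ, 0 < t → t • X ∈ C)
    (Xstar : Matrix (Fin m) (Fin m) ℂ) (hXC : Xstar ∈ C) (hXpd : Xstar.PosDef)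
    (hXfeas : (1 / n : ℝ) * ∑ i, (star (y i) ⬝ᵥ Xstar⁻¹ *ᵥ y i).re ≤ 1)
    (hXopt : ∀ X ∈ C, X.PosDef →
      (1 / n : ℝ) * ∑ i, (star (y i) ⬝ᵥ X⁻¹ *ᵥ y i).re ≤ 1 →
      Real.log Xstar.det.re ≤ Real.log X.det.re) :
    ((1 / m : ℝ) • Xstar ∈ C) ∧ ((1 / m : ℝ) • Xstar).PosDef ∧
    ∀ R ∈ C, R.PosDef →
      (1 / n : ℝ) * ∑ i, (star (y i) ⬝ᵥ ((1 / m : ℝ) • Xstar)⁻¹ *ᵥ y i).re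
          + Real.log ((1 / m : ℝ) • Xstar).det.re
        ≤ (1 / n : ℝ) * ∑ i, (star (y i) ⬝ᵥ R⁻¹ *ᵥ y i).re
          + Real.log R.det.re := by
  have : Nonempty (Fin m) := ⟨⟨0, hm⟩⟩
  have hinv_m : (0 : ℝ) < 1 / m := by positivity
  refine ⟨hcone Xstar hXC _ hinv_m, hXpd.smul hinv_m, fun R hRC hR => ?_⟩
  have h := IsLogDetMinOn.objective_le (y := y) hXopt hcone hXC hXpd hXfeas hRC hR
  rwa [Fintype.card_fin] at h

/-- Equivalence between the MLE problem and its reformulation: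
if `X*` minimizes `log det X` over positive definite `X` in a closed cone `C`
of Hermitian matrices subject to `(1/n) Σ yᵢᴴ X⁻¹ yᵢ ≤ 1`, then `R* = X*/m`
minimizes `(1/n) Σ yᵢᴴ R⁻¹ yᵢ + log det R` over positive definite `R ∈ C`. -/
theorem stmt4 {m n : ℕ} (hm : 0 < m) (hn : 0 < n)
    (y : Fin n → Fin m → ℂ) (C : Set (Matrix (Fin m) (Fin m) ℂ))
    (hherm : ∀ X ∈ C, X.IsHermitian) (hclosed : IsClosed C)
    (hcone : ∀ X ∈ C, ∀ t : ℝ, 0 < t → t • X ∈ C)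
    (Xstar : Matrix (Fin m) (Fin m) ℂ) (hXC : Xstar ∈ C) (hXpd : Xstar.PosDef)
    (hXfeas : (1 / n : ℝ) * ∑ i, (star (y i) ⬝ᵥ Xstar⁻¹ *ᵥ y i).re ≤ 1)
    (hXopt : ∀ X ∈ C, X.PosDef →
      (1 / n : ℝ) * ∑ i, (star (y i) ⬝ᵥ X⁻¹ *ᵥ y i).re ≤ 1 →
      Real.log Xstar.det.re ≤ Real.log X.det.re) :
    ((1 / m : ℝ) • Xstar ∈ C) ∧ ((1 / m : ℝ) • Xstar).PosDef ∧
    ∀ R ∈ C, R.PosDef →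
      (1 / n : ℝ) * ∑ i, (star (y i) ⬝ᵥ ((1 / m : ℝ) • Xstar)⁻¹ *ᵥ y i).re
          + Real.log ((1 / m : ℝ) • Xstar).det.re
        ≤ (1 / n : ℝ) * ∑ i, (star (y i) ⬝ᵥ R⁻¹ *ᵥ y i).re
          + Real.log R.det.re :=
  stmt4_general hm y C hcone Xstar hXC hXpd hXfeas hXopt
end

section
/- Let B be an m×m Hermitian matrix with spectral decomposition B = U·diag(β)·U^H, and let C ⊆ ℝ^m be a set of eigenvalue vectors that is invariant under permutations. Consider minimizing ‖X − B‖_F² over Hermitian X whose eigenvalue vector lies in C. If γ* minimizes Σ_i (γ_i − β_i)² over γ ∈ C with both γ and β sorted in decreasing order, then X* = U·diag(γ*)·U^H is optimal, with optimal value Σ_i (γ_i* − β_i)². -/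
open Matrix

section Aux

lemma aux_key {m : ℕ} (a b : Fin m → ℝ) (ha : Antitone a) (hb : Antitone b)
    (S : Matrix (Fin m) (Fin m) ℝ) (hS : S ∈ doublyStochastic ℝ (Fin m)) :
    ∑ i, ∑ j, a i * b j * S i j ≤ ∑ i, a i * b i := by
  have hmono : Monovary b a := by
    intro i j hij
    rcases le_total j i with h | h
    · exact hb h
    · exact absurd hij (not_lt.2 (ha h))
  obtain ⟨w, hw0, hw1, hwS⟩ := exists_eq_sum_perm_of_mem_doublyStochastic hS
  have hSij : ∀ i j, S i j = ∑ σ : Equiv.Perm (Fin m), w σ * σ.permMatrix ℝ i j := by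
    intro i j; rw [← hwS]
    simp only [Matrix.sum_apply, Matrix.smul_apply, smul_eq_mul]
  calc ∑ i, ∑ j, a i * b j * S i j
      = ∑ σ : Equiv.Perm (Fin m), w σ * ∑ i, a i * b (σ i) := by
        simp_rw [hSij, Finset.mul_sum]
        rw [show (∑ i, ∑ j, ∑ σ : Equiv.Perm (Fin m), a i * b j * (w σ * σ.permMatrix ℝ i j))
            = ∑ i, ∑ σ : Equiv.Perm (Fin m), ∑ j, a i * b j * (w σ * σ.permMatrix ℝ i j) from
          Finset.sum_congr rfl fun i _ => Finset.sum_comm]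
        rw [Finset.sum_comm]
        refine Finset.sum_congr rfl fun σ _ => ?_
        simp only [Equiv.Perm.permMatrix, PEquiv.toMatrix_apply, Equiv.toPEquiv_apply,
          Option.mem_def, Option.some.injEq, mul_ite, mul_one, mul_zero,
          Finset.sum_ite_eq, Finset.mem_univ, if_true]
        exact Finset.sum_congr rfl fun i _ => by ring
    _ ≤ ∑ σ : Equiv.Perm (Fin m), w σ * ∑ i, a i * b i := by
        refine Finset.sum_le_sum fun σ _ => mul_le_mul_of_nonneg_left ?_ (hw0 σ)
        have h := hmono.sum_comp_perm_mul_le_sum_mul (σ := σ)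
        calc ∑ i, a i * b (σ i) = ∑ i, b (σ i) * a i :=
              Finset.sum_congr rfl fun i _ => mul_comm _ _
          _ ≤ ∑ i, b i * a i := h
          _ = ∑ i, a i * b i := Finset.sum_congr rfl fun i _ => mul_comm _ _
    _ = ∑ i, a i * b i := by rw [← Finset.sum_mul, hw1, one_mul]

lemma aux_trace_conj {m : ℕ} (U A : Matrix (Fin m) (Fin m) ℂ)
    (hU : U ∈ Matrix.unitaryGroup (Fin m) ℂ) :
    Matrix.trace (U * A * Uᴴ) = Matrix.trace A := by
  have h : Uᴴ * U = 1 := by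
    rw [← Matrix.star_eq_conjTranspose]; exact hU.1
  rw [Matrix.trace_mul_comm, ← Matrix.mul_assoc, h, Matrix.one_mul]

lemma aux_same_U {m : ℕ} (U : Matrix (Fin m) (Fin m) ℂ)
    (hU : U ∈ Matrix.unitaryGroup (Fin m) ℂ) (c d : Fin m → ℂ) :
    Matrix.trace ((U * Matrix.diagonal c * Uᴴ) * (U * Matrix.diagonal d * Uᴴ))
      = ∑ i, c i * d i := by
  have h : Uᴴ * U = 1 := by
    rw [← Matrix.star_eq_conjTranspose]; exact hU.1
  have key : (U * Matrix.diagonal c * Uᴴ) * (U * Matrix.diagonal d * Uᴴ)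
      = U * (Matrix.diagonal c * Matrix.diagonal d) * Uᴴ := by
    simp only [← Matrix.mul_assoc]
    rw [Matrix.mul_assoc (U * Matrix.diagonal c) Uᴴ U, h, Matrix.mul_one]
  rw [key, aux_trace_conj _ _ hU, Matrix.diagonal_mul_diagonal, Matrix.trace_diagonal]

lemma aux_trace_diag {m : ℕ} (c d : Fin m → ℂ) (V : Matrix (Fin m) (Fin m) ℂ) :
    Matrix.trace (Matrix.diagonal c * V * Matrix.diagonal d * Vᴴ)
      = ∑ i, ∑ j, c i * d j * (V i j * star (V i j)) := by
  simp only [Matrix.trace, Matrix.diag, Matrix.mul_apply, Matrix.conjTranspose_apply,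
    Matrix.diagonal_apply, ite_mul, zero_mul, mul_ite, mul_zero, Finset.sum_ite_eq,
    Finset.sum_ite_eq', Finset.mem_univ, if_true]
  refine Finset.sum_congr rfl fun i _ => Finset.sum_congr rfl fun j _ => by ring

lemma aux_cross {m : ℕ} (U W : Matrix (Fin m) (Fin m) ℂ) (c d : Fin m → ℂ) :
    Matrix.trace ((U * Matrix.diagonal c * Uᴴ) * (W * Matrix.diagonal d * Wᴴ))
      = ∑ i, ∑ j, c i * d j * ((Uᴴ * W) i j * star ((Uᴴ * W) i j)) := by
  rw [← aux_trace_diag]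
  have hconj : (Uᴴ * W)ᴴ = Wᴴ * U := by
    rw [Matrix.conjTranspose_mul, Matrix.conjTranspose_conjTranspose]
  rw [hconj]
  simp only [Matrix.mul_assoc]
  rw [Matrix.trace_mul_comm]
  simp only [Matrix.mul_assoc]

end Aux

/-- Reduction of unitarily invariant matrix nearness problems to eigenvalue
vector problems: if `γ*` solves the sorted vector problem over a
permutation-invariant set `C`, then `U diag(γ*) Uᴴ` solves the matrix problem. -/
theorem stmt15 {m : ℕ} (B : Matrix (Fin m) (Fin m) ℂ) (hB : B.IsHermitian)
    (U : Matrix (Fin m) (Fin m) ℂ) (hU : U ∈ Matrix.unitaryGroup (Fin m) ℂ)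
    (β : Fin m → ℝ) (hβsort : ∀ i j : Fin m, i ≤ j → β j ≤ β i)
    (hdec : B = U * Matrix.diagonal (fun i => (β i : ℂ)) * Uᴴ)
    (C : Set (Fin m → ℝ))
    (hperm : ∀ γ ∈ C, ∀ e : Equiv.Perm (Fin m), γ ∘ e ∈ C)
    (γstar : Fin m → ℝ) (hγC : γstar ∈ C)
    (hγsort : ∀ i j : Fin m, i ≤ j → γstar j ≤ γstar i)
    (hγopt : ∀ γ ∈ C, (∀ i j : Fin m, i ≤ j → γ j ≤ γ i) →
      ∑ i, (γstar i - β i) ^ 2 ≤ ∑ i, (γ i - β i) ^ 2)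
    (Xstar : Matrix (Fin m) (Fin m) ℂ)
    (hXstar : Xstar = U * Matrix.diagonal (fun i => (γstar i : ℂ)) * Uᴴ) :
    (Matrix.trace ((Xstar - B)ᴴ * (Xstar - B))).re
        = ∑ i, (γstar i - β i) ^ 2 ∧
    ∀ (X W : Matrix (Fin m) (Fin m) ℂ) (γ : Fin m → ℝ),
      W ∈ Matrix.unitaryGroup (Fin m) ℂ → γ ∈ C →
      X = W * Matrix.diagonal (fun i => (γ i : ℂ)) * Wᴴ →
      (Matrix.trace ((Xstar - B)ᴴ * (Xstar - B))).re
        ≤ (Matrix.trace ((X - B)ᴴ * (X - B))).re := by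
  -- the expansion identity for real sums
  have expand : ∀ a b : Fin m → ℝ,
      ∑ i, (a i - b i) ^ 2 = ∑ i, a i ^ 2 + ∑ i, b i ^ 2 - 2 * ∑ i, a i * b i := by
    intro a b
    rw [← Finset.sum_add_distrib, Finset.mul_sum, ← Finset.sum_sub_distrib]
    exact Finset.sum_congr rfl fun i _ => by ring
  -- Part 1: the equality
  have hzz : ∀ z : ℂ, z * star z = ((Complex.normSq z : ℝ) : ℂ) := fun z => by
    rw [Complex.star_def, Complex.mul_conj]
  have hdiag : (Matrix.diagonal fun i => (γstar i : ℂ) - (β i : ℂ))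
      = Matrix.diagonal fun i => ((γstar i - β i : ℝ) : ℂ) := by
    congr 1; funext i; push_cast; ring
  have h1 : Xstar - B = U * Matrix.diagonal (fun i => ((γstar i - β i : ℝ) : ℂ)) * Uᴴ := by
    rw [hXstar, hdec, ← Matrix.sub_mul, ← Matrix.mul_sub, Matrix.diagonal_sub, hdiag]
  have hcstar : star (fun i => ((γstar i - β i : ℝ) : ℂ)) = fun i => ((γstar i - β i : ℝ) : ℂ) := by
    funext i; simp
  have h1H : (Xstar - B)ᴴ = U * Matrix.diagonal (fun i => ((γstar i - β i : ℝ) : ℂ)) * Uᴴ := by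
    rw [h1, Matrix.conjTranspose_mul, Matrix.conjTranspose_mul,
      Matrix.conjTranspose_conjTranspose, Matrix.diagonal_conjTranspose, hcstar,
      ← Matrix.mul_assoc]
  have e1 : Matrix.trace ((Xstar - B)ᴴ * (Xstar - B))
      = ((∑ i, (γstar i - β i) ^ 2 : ℝ) : ℂ) := by
    rw [h1H, h1, aux_same_U U hU]
    push_cast
    exact Finset.sum_congr rfl fun i _ => by ring
  have part1 : (Matrix.trace ((Xstar - B)ᴴ * (Xstar - B))).re = ∑ i, (γstar i - β i) ^ 2 := by
    rw [e1, Complex.ofReal_re]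
  refine ⟨part1, ?_⟩
  intro X W γ hW hγ hX
  rw [part1]
  -- Hermitian facts
  have hBH : Bᴴ = B := hB
  have hstarγ : star (fun i => (γ i : ℂ)) = fun i => (γ i : ℂ) := by funext i; simp
  have hXH : Xᴴ = X := by
    rw [hX, Matrix.conjTranspose_mul, Matrix.conjTranspose_mul,
      Matrix.conjTranspose_conjTranspose, Matrix.diagonal_conjTranspose, hstarγ,
      ← Matrix.mul_assoc]
  have hXBH : (X - B)ᴴ = X - B := by rw [Matrix.conjTranspose_sub, hXH, hBH]
  -- the doubly stochastic matrix
  set V : Matrix (Fin m) (Fin m) ℂ := Wᴴ * U with hV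
  set S : Matrix (Fin m) (Fin m) ℝ := Matrix.of (fun i j => Complex.normSq (V i j)) with hSdef
  have hWU : Wᴴ * W = 1 := by rw [← Matrix.star_eq_conjTranspose]; exact hW.1
  have hWU' : W * Wᴴ = 1 := by rw [← Matrix.star_eq_conjTranspose]; exact hW.2
  have hUU : Uᴴ * U = 1 := by rw [← Matrix.star_eq_conjTranspose]; exact hU.1
  have hUU' : U * Uᴴ = 1 := by rw [← Matrix.star_eq_conjTranspose]; exact hU.2
  have hVV : V * Vᴴ = 1 := by
    rw [hV, Matrix.conjTranspose_mul, Matrix.conjTranspose_conjTranspose,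
      Matrix.mul_assoc, ← Matrix.mul_assoc U, hUU', Matrix.one_mul, hWU]
  have hVV' : Vᴴ * V = 1 := by
    rw [hV, Matrix.conjTranspose_mul, Matrix.conjTranspose_conjTranspose,
      Matrix.mul_assoc, ← Matrix.mul_assoc W, hWU', Matrix.one_mul, hUU]
  have hrow : ∀ i, ∑ j, S i j = 1 := by
    intro i
    have := congrArg (fun M => (M i i).re) hVV
    simp only [Matrix.mul_apply, Matrix.conjTranspose_apply, Matrix.one_apply_eq,
      Complex.one_re] at this
    rw [← this, Complex.re_sum]
    refine Finset.sum_congr rfl fun j _ => ?_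
    rw [hzz, Complex.ofReal_re]
    rfl
  have hcol : ∀ j, ∑ i, S i j = 1 := by
    intro j
    have := congrArg (fun M => (M j j).re) hVV'
    simp only [Matrix.mul_apply, Matrix.conjTranspose_apply, Matrix.one_apply_eq,
      Complex.one_re] at this
    rw [← this, Complex.re_sum]
    refine Finset.sum_congr rfl fun i _ => ?_
    rw [mul_comm, hzz, Complex.ofReal_re]
    rfl
  -- trace computation
  have hXX : Matrix.trace (X * X) = ((∑ i, γ i ^ 2 : ℝ) : ℂ) := by
    rw [hX, aux_same_U W hW]
    push_cast
    exact Finset.sum_congr rfl fun i _ => by ring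
  have hBB : Matrix.trace (B * B) = ((∑ i, β i ^ 2 : ℝ) : ℂ) := by
    rw [hdec, aux_same_U U hU]
    push_cast
    exact Finset.sum_congr rfl fun i _ => by ring
  have hXB : Matrix.trace (X * B) = ((∑ i, ∑ j, γ i * β j * S i j : ℝ) : ℂ) := by
    rw [hX, hdec, aux_cross W U]
    push_cast
    refine Finset.sum_congr rfl fun i _ => Finset.sum_congr rfl fun j _ => ?_
    rw [hzz]
    rfl
  have hBX : Matrix.trace (B * X) = Matrix.trace (X * B) := Matrix.trace_mul_comm _ _
  have hre : (Matrix.trace ((X - B)ᴴ * (X - B))).re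
      = ∑ i, γ i ^ 2 + ∑ i, β i ^ 2 - 2 * ∑ i, ∑ j, γ i * β j * S i j := by
    rw [hXBH]
    have : Matrix.trace ((X - B) * (X - B))
        = ((∑ i, γ i ^ 2 + ∑ i, β i ^ 2 - 2 * (∑ i, ∑ j, γ i * β j * S i j) : ℝ) : ℂ) := by
      rw [Matrix.sub_mul, Matrix.mul_sub, Matrix.mul_sub, Matrix.trace_sub, Matrix.trace_sub,
        Matrix.trace_sub, hXX, hBB, hXB, hBX, hXB]
      push_cast
      ring
    rw [this, Complex.ofReal_re]
  rw [hre]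
  -- the sorted competitor
  set e : Equiv.Perm (Fin m) := Fin.revPerm.trans (Tuple.sort γ) with he
  have hγ'C : γ ∘ e ∈ C := hperm γ hγ e
  have hγ'anti : Antitone (γ ∘ e) := by
    intro i j hij
    exact Tuple.monotone_sort γ (Fin.rev_le_rev.2 hij)
  have hopt := hγopt (γ ∘ e) hγ'C (fun i j hij => hγ'anti hij)
  -- S' doubly stochastic
  set S' : Matrix (Fin m) (Fin m) ℝ := Matrix.of (fun i j => S (e i) j) with hS'def
  have hS' : S' ∈ doublyStochastic ℝ (Fin m) := by
    rw [mem_doublyStochastic_iff_sum]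
    refine ⟨fun i j => Complex.normSq_nonneg _, fun i => hrow (e i), fun j => ?_⟩
    rw [show (∑ i, S' i j) = ∑ i, S (e i) j from rfl, Equiv.sum_comp e (fun i => S i j)]
    exact hcol j
  have hT : ∑ i, ∑ j, γ i * β j * S i j = ∑ i, ∑ j, (γ ∘ e) i * β j * S' i j := by
    rw [← Equiv.sum_comp e (fun i => ∑ j, γ i * β j * S i j)]
    rfl
  have hkey := aux_key (γ ∘ e) β hγ'anti (fun i j hij => hβsort i j hij) S' hS'
  have hsumsq : ∑ i, (γ ∘ e) i ^ 2 = ∑ i, γ i ^ 2 := Equiv.sum_comp e (fun i => γ i ^ 2)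
  have final : ∑ i, (γstar i - β i) ^ 2 ≤ ∑ i, ((γ ∘ e) i - β i) ^ 2 := hopt
  rw [expand (γ ∘ e) β] at final
  rw [hT]
  rw [← hsumsq]
  linarith
end
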